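/- For any m-marked cycle shape ρ of size ≤ n, ψ(𝐀_ρ(n)) = C(n − |ρ| + m₁(ρ), m₁(ρ)) · K_{ρ̲ₙ}, where 𝐀_ρ(n) is the sum in B^m_n of all m-partial permutations with m-marked cycle type ρ and K_{ρ̲ₙ} is the sum in ℂ[S_n] of all permutations of [n] with m-marked cycle type ρ̲ₙ. -/

import Mathlib

/-- An `m`-partial permutation (of ℕ): a finite domain `d` containing `[m] = {0,…,m-1}`
together with a permutation of `d`, encoded by its extension `σ` to `ℕ` which is the
identity outside `d`. -/
structure MPP (m : ℕ) where
  d : Finset ℕ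
  σ : Equiv.Perm ℕ
  range_sub : Finset.range m ⊆ d
  fix : ∀ x ∉ d, σ x = x

namespace MPP

variable {m : ℕ}

@[ext] theorem ext {p q : MPP m} (hd : p.d = q.d) (hσ : p.σ = q.σ) : p = q := by
  cases p; cases q; simp only [mk.injEq]; exact ⟨hd, hσ⟩

/-- The product of `m`-partial permutations: union of the domains, composition of the
extended permutations (restricted to the union). -/
instance : Monoid (MPP m) where
  mul p q := ⟨p.d ∪ q.d, p.σ * q.σ, p.range_sub.trans Finset.subset_union_left,
    fun x hx => by
      have hq : x ∉ q.d := fun h => hx (Finset.mem_union_right _ h)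
      have hp : x ∉ p.d := fun h => hx (Finset.mem_union_left _ h)
      simp [Equiv.Perm.mul_apply, q.fix x hq, p.fix x hp]⟩
  one := ⟨Finset.range m, 1, le_refl _, fun _ _ => rfl⟩
  mul_assoc p q r := ext (Finset.union_assoc _ _ _) (mul_assoc _ _ _)
  one_mul p := ext (Finset.union_eq_right.mpr p.range_sub) (one_mul _)
  mul_one p := ext (Finset.union_eq_left.mpr p.range_sub) (mul_one _)

@[simp] theorem mul_d (p q : MPP m) : (p * q).d = p.d ∪ q.d := rfl
@[simp] theorem mul_σ (p q : MPP m) : (p * q).σ = p.σ * q.σ := rfl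
@[simp] theorem one_d : (1 : MPP m).d = Finset.range m := rfl
@[simp] theorem one_σ : (1 : MPP m).σ = 1 := rfl

/-- Two `m`-partial permutations have the same `m`-marked cycle type iff there is a
relabelling of ℕ fixing `[m]` pointwise carrying one to the other. -/
def sameType (p q : MPP m) : Prop :=
  ∃ σ : Equiv.Perm ℕ, (∀ x < m, σ x = x) ∧ p.d.image σ = q.d ∧ σ * p.σ * σ⁻¹ = q.σ

/-- `m₁`: the number of trivial cycles `(∗)`, i.e. fixed points of the permutation lying
in the domain but outside `[m]`. -/
def m1 (p : MPP m) : ℕ := ((p.d \ Finset.range m).filter (fun x => p.σ x = x)).card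

/-- `p` padded with fixed points so that its domain becomes `[n]` (when `p.d ⊆ [n]`);
this realizes the shape `ρ̲ₙ`. -/
def padTo (n : ℕ) (p : MPP m) : MPP m :=
  ⟨p.d ∪ Finset.range n, p.σ, p.range_sub.trans Finset.subset_union_left,
   fun x hx => p.fix x fun h => hx (Finset.mem_union_left _ h)⟩

/-- `p` with `k` fresh fixed points adjoined to its domain; this realizes the shape `ρᵏ`. -/
def addFix (p : MPP m) (k : ℕ) : MPP m :=
  ⟨p.d ∪ (Finset.range (p.d.sup id + 1 + k) \ Finset.range (p.d.sup id + 1)), p.σ,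
   p.range_sub.trans Finset.subset_union_left,
   fun x hx => p.fix x fun h => hx (Finset.mem_union_left _ h)⟩

/-- A shape is proper when it has no cycle `(∗)`, i.e. no fixed point outside `[m]`. -/
def isProper (p : MPP m) : Prop := ∀ x ∈ p.d, m ≤ x → p.σ x ≠ x

/-- The subgroup `Stab_n(m)` of permutations of ℕ fixing `[m]` pointwise and fixing
everything outside `[n]` (i.e. `Stab_n(m) ≤ S_n`). -/
def StabN (m n : ℕ) : Subgroup (Equiv.Perm ℕ) where
  carrier := {σ | (∀ x < m, σ x = x) ∧ (∀ x, n ≤ x → σ x = x)}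
  one_mem' := ⟨fun _ _ => rfl, fun _ _ => rfl⟩
  mul_mem' := by
    rintro σ τ ⟨h1, h2⟩ ⟨h3, h4⟩
    exact ⟨fun x hx => by simp [Equiv.Perm.mul_apply, h3 x hx, h1 x hx],
           fun x hx => by simp [Equiv.Perm.mul_apply, h4 x hx, h2 x hx]⟩
  inv_mem' := by
    rintro σ ⟨h1, h2⟩
    refine ⟨fun x hx => ?_, fun x hx => ?_⟩
    · conv_lhs => rw [← h1 x hx]
      exact σ.symm_apply_apply x
    · conv_lhs => rw [← h2 x hx]
      exact σ.symm_apply_apply x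

/-- The conjugation action of `Stab_n(m)` on `m`-partial permutations:
`σ·(d,ω) = (σ(d), σ∘ω∘σ⁻¹)`. -/
def conjAct {n : ℕ} (σ : StabN m n) (p : MPP m) : MPP m :=
  ⟨p.d.image (σ : Equiv.Perm ℕ), (σ : Equiv.Perm ℕ) * p.σ * (σ : Equiv.Perm ℕ)⁻¹,
   fun x hx => Finset.mem_image.mpr
     ⟨x, p.range_sub hx, σ.2.1 x (Finset.mem_range.mp hx)⟩,
   fun x hx => by
     have h1 : (σ : Equiv.Perm ℕ)⁻¹ x ∉ p.d := fun h =>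
       hx (Finset.mem_image.mpr ⟨_, h, Equiv.apply_symm_apply _ x⟩)
     simp [Equiv.Perm.mul_apply, show p.σ ((σ : Equiv.Perm ℕ).symm x) = (σ : Equiv.Perm ℕ).symm x from p.fix _ h1]⟩

end MPP

theorem Equiv.Perm.apply_inv_self {α : Type*} (f : Equiv.Perm α) (x : α) : f (f⁻¹ x) = x :=
  Equiv.apply_symm_apply f x

namespace MPPAux

open Finset

variable {m n : ℕ}

lemma mem_d_apply (p : MPP m) {x : ℕ} (hx : x ∈ p.d) : p.σ x ∈ p.d := by
  by_contra h
  have h1 := p.fix _ h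
  have h2 := p.σ.injective h1
  exact h (by rwa [h2])

lemma conj_apply {p q : MPP m} {τ : Equiv.Perm ℕ} (h : τ * p.σ * τ⁻¹ = q.σ) (x : ℕ) :
    τ (p.σ x) = q.σ (τ x) := by
  rw [← h]
  simp [Equiv.Perm.mul_apply]

lemma conj_eq {p q : MPP m} {τ : Equiv.Perm ℕ} (h : ∀ x, τ (p.σ x) = q.σ (τ x)) :
    τ * p.σ * τ⁻¹ = q.σ := by
  ext y
  simp only [Equiv.Perm.mul_apply]
  rw [h, Equiv.Perm.apply_inv_self]

lemma sameType_trans {p q r : MPP m} (h1 : p.sameType q) (h2 : q.sameType r) :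
    p.sameType r := by
  obtain ⟨σ, hσm, hσd, hσc⟩ := h1
  obtain ⟨τ, hτm, hτd, hτc⟩ := h2
  refine ⟨τ * σ, fun x hx => by simp [Equiv.Perm.mul_apply, hσm x hx, hτm x hx], ?_, ?_⟩
  · rw [← hτd, ← hσd, Finset.image_image]
    rfl
  · rw [← hτc, ← hσc]
    group

lemma m1_eq_of_sameType {p q : MPP m} (h : p.sameType q) : p.m1 = q.m1 := by
  obtain ⟨τ, hm, hd, hc⟩ := h
  have hfun : ∀ x, τ (p.σ x) = q.σ (τ x) := conj_apply hc
  unfold MPP.m1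
  have himg : (q.d \ Finset.range m).filter (fun x => q.σ x = x)
      = ((p.d \ Finset.range m).filter (fun x => p.σ x = x)).image τ := by
    ext y
    simp only [Finset.mem_filter, Finset.mem_sdiff, Finset.mem_image, Finset.mem_range]
    constructor
    · rintro ⟨⟨hyd, hym⟩, hyfix⟩
      rw [← hd] at hyd
      obtain ⟨x, hx, rfl⟩ := Finset.mem_image.1 hyd
      refine ⟨x, ⟨⟨hx, fun hxm => hym (by rw [hm x hxm]; exact hxm)⟩, ?_⟩, rfl⟩
      have h1 := hfun x
      rw [hyfix] at h1
      exact τ.injective h1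
    · rintro ⟨x, ⟨⟨hxd, hxm⟩, hxfix⟩, rfl⟩
      refine ⟨⟨?_, fun hτm => hxm ?_⟩, ?_⟩
      · rw [← hd]; exact Finset.mem_image_of_mem _ hxd
      · have h1 := hm (τ x) hτm
        have h2 := τ.injective h1
        rw [← h2]; exact hτm
      · rw [← hfun x, hxfix]
  rw [himg, Finset.card_image_of_injective _ τ.injective]

lemma card_d_eq_of_sameType {p q : MPP m} (h : p.sameType q) : p.d.card = q.d.card := by
  obtain ⟨τ, _, hd, _⟩ := h
  rw [← hd, Finset.card_image_of_injective _ τ.injective]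

lemma exists_extPerm (n : ℕ) (s t : Finset ℕ) (hs : s ⊆ Finset.range n)
    (ht : t ⊆ Finset.range n) (f : ℕ → ℕ) (hf : Set.BijOn f ↑s ↑t) :
    ∃ τ : Equiv.Perm ℕ, (∀ x ∈ s, τ x = f x) ∧
      (∀ x, x ∈ Finset.range n → x ∉ s → τ x ∈ Finset.range n \ t) ∧
      (∀ x ∉ Finset.range n, τ x = x) := by
  classical
  have hcard : s.card = t.card := by
    apply Finset.card_bij (fun a _ => f a)
    · intro a ha; exact hf.mapsTo ha
    · intro a ha b hb hab; exact hf.injOn ha hb hab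
    · intro b hb
      obtain ⟨a, ha, rfl⟩ := hf.surjOn hb
      exact ⟨a, ha, rfl⟩
  have hcard2 : (Finset.range n \ s).card = (Finset.range n \ t).card := by
    rw [Finset.card_sdiff_of_subset hs, Finset.card_sdiff_of_subset ht, hcard]
  let e₂ := Finset.equivOfCardEq hcard2
  let g := Function.invFunOn f ↑s
  have hg1 : ∀ x ∈ s, g (f x) = x := fun x hx => hf.injOn.leftInvOn_invFunOn hx
  have hg2 : ∀ y ∈ t, f (g y) = y := fun y hy => hf.surjOn.rightInvOn_invFunOn hy
  have hg3 : ∀ y ∈ t, g y ∈ s := fun y hy => hf.surjOn.mapsTo_invFunOn hy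
  refine ⟨⟨fun x => if h : x ∈ s then f x
      else if h2 : x ∈ Finset.range n then (e₂ ⟨x, Finset.mem_sdiff.2 ⟨h2, h⟩⟩ : ℕ) else x,
    fun y => if h : y ∈ t then g y
      else if h2 : y ∈ Finset.range n then (e₂.symm ⟨y, Finset.mem_sdiff.2 ⟨h2, h⟩⟩ : ℕ) else y,
    ?_, ?_⟩, ?_, ?_, ?_⟩
  · intro x
    by_cases hx : x ∈ s
    · simp only [dif_pos hx]
      have hfx : f x ∈ t := hf.mapsTo hx
      simp only [dif_pos hfx]
      exact hg1 x hx
    · by_cases hx2 : x ∈ Finset.range n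
      · simp only [dif_neg hx, dif_pos hx2]
        have hmem := (e₂ ⟨x, Finset.mem_sdiff.2 ⟨hx2, hx⟩⟩).2
        have hnt : (e₂ ⟨x, Finset.mem_sdiff.2 ⟨hx2, hx⟩⟩ : ℕ) ∉ t :=
          (Finset.mem_sdiff.1 hmem).2
        have hrn : (e₂ ⟨x, Finset.mem_sdiff.2 ⟨hx2, hx⟩⟩ : ℕ) ∈ Finset.range n :=
          (Finset.mem_sdiff.1 hmem).1
        simp only [dif_neg hnt, dif_pos hrn]
        have : (⟨(e₂ ⟨x, Finset.mem_sdiff.2 ⟨hx2, hx⟩⟩ : ℕ), Finset.mem_sdiff.2 ⟨hrn, hnt⟩⟩ :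
            {y // y ∈ Finset.range n \ t}) = e₂ ⟨x, Finset.mem_sdiff.2 ⟨hx2, hx⟩⟩ :=
          Subtype.ext rfl
        rw [this, Equiv.symm_apply_apply]
      · have hxt : x ∉ t := fun h => hx2 (ht h)
        simp only [dif_neg hx, dif_neg hx2, dif_neg hxt]
  · intro y
    by_cases hy : y ∈ t
    · simp only [dif_pos hy]
      have hgy : g y ∈ s := hg3 y hy
      simp only [dif_pos hgy]
      exact hg2 y hy
    · by_cases hy2 : y ∈ Finset.range n
      · simp only [dif_neg hy, dif_pos hy2]
        have hmem := (e₂.symm ⟨y, Finset.mem_sdiff.2 ⟨hy2, hy⟩⟩).2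
        have hns : (e₂.symm ⟨y, Finset.mem_sdiff.2 ⟨hy2, hy⟩⟩ : ℕ) ∉ s :=
          (Finset.mem_sdiff.1 hmem).2
        have hrn : (e₂.symm ⟨y, Finset.mem_sdiff.2 ⟨hy2, hy⟩⟩ : ℕ) ∈ Finset.range n :=
          (Finset.mem_sdiff.1 hmem).1
        simp only [dif_neg hns, dif_pos hrn]
        have : (⟨(e₂.symm ⟨y, Finset.mem_sdiff.2 ⟨hy2, hy⟩⟩ : ℕ),
            Finset.mem_sdiff.2 ⟨hrn, hns⟩⟩ : {x // x ∈ Finset.range n \ s})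
            = e₂.symm ⟨y, Finset.mem_sdiff.2 ⟨hy2, hy⟩⟩ := Subtype.ext rfl
        rw [this, Equiv.apply_symm_apply]
      · have hys : y ∉ s := fun h => hy2 (hs h)
        simp only [dif_neg hy, dif_neg hy2, dif_neg hys]
  · intro x hx
    simp only [Equiv.coe_fn_mk, dif_pos hx]
  · intro x hxn hxs
    simp only [Equiv.coe_fn_mk, dif_neg hxs, dif_pos hxn]
    exact (e₂ ⟨x, Finset.mem_sdiff.2 ⟨hxn, hxs⟩⟩).2
  · intro x hx
    have hxs : x ∉ s := fun h => hx (hs h)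
    simp only [Equiv.coe_fn_mk, dif_neg hxs, dif_neg hx]


lemma sameType_nice {m n : ℕ} {p q : MPP m} (hp : p.d ⊆ Finset.range n)
    (hq : q.d ⊆ Finset.range n) (h : p.sameType q) :
    ∃ τ : Equiv.Perm ℕ, (∀ x < m, τ x = x) ∧ (∀ x ∈ p.d, τ x ∈ q.d) ∧
      (∀ x, x ∈ Finset.range n → x ∉ p.d → τ x ∈ Finset.range n \ q.d) ∧
      (∀ x ∉ Finset.range n, τ x = x) ∧
      p.d.image τ = q.d ∧ τ * p.σ * τ⁻¹ = q.σ := by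
  obtain ⟨τ₀, hm, hd, hc⟩ := h
  have hb : Set.BijOn τ₀ ↑p.d ↑q.d := by
    refine ⟨?_, τ₀.injective.injOn, ?_⟩
    · intro x hx
      rw [← hd]
      exact Finset.mem_coe.2 (Finset.mem_image_of_mem _ hx)
    · intro y hy
      rw [← hd] at hy
      obtain ⟨x, hx, rfl⟩ := Finset.mem_image.1 hy
      exact ⟨x, hx, rfl⟩
  obtain ⟨τ, hτs, hτc, hτo⟩ := exists_extPerm n p.d q.d hp hq τ₀ hb
  have himg : p.d.image τ = q.d := by
    rw [← hd]
    exact Finset.image_congr (fun x hx => hτs x hx)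
  have hmaps : ∀ x ∈ p.d, τ x ∈ q.d := by
    intro x hx
    rw [← himg]
    exact Finset.mem_image_of_mem _ hx
  refine ⟨τ, ?_, hmaps, hτc, hτo, himg, ?_⟩
  · intro x hx
    have hxd : x ∈ p.d := p.range_sub (Finset.mem_range.2 hx)
    rw [hτs x hxd]
    exact hm x hx
  · apply conj_eq
    intro x
    by_cases hx : x ∈ p.d
    · rw [hτs _ (mem_d_apply p hx), hτs x hx]
      exact conj_apply hc x
    · rw [p.fix x hx]
      by_cases hx2 : x ∈ Finset.range n
      · have := (Finset.mem_sdiff.1 (hτc x hx2 hx)).2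
        rw [q.fix _ this]
      · rw [hτo x hx2, q.fix x (fun h => hx2 (hq h))]

lemma padTo_d_eq {m n : ℕ} (r : MPP m) (hr : r.d ⊆ Finset.range n) :
    (r.padTo n).d = Finset.range n :=
  Finset.union_eq_right.2 hr

lemma pad_sameType {m n : ℕ} {r p : MPP m} (hr : r.d ⊆ Finset.range n)
    (hp : p.d ⊆ Finset.range n) (h : r.sameType p) :
    (r.padTo n).sameType (p.padTo n) := by
  obtain ⟨τ, hτm, hτmaps, hτc, hτo, hτim, hτconj⟩ := sameType_nice hr hp h
  have hmapsn : ∀ x ∈ Finset.range n, τ x ∈ Finset.range n := by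
    intro x hx
    by_cases hxd : x ∈ r.d
    · exact hp (hτmaps x hxd)
    · exact (Finset.mem_sdiff.1 (hτc x hx hxd)).1
  refine ⟨τ, hτm, ?_, hτconj⟩
  rw [padTo_d_eq r hr, padTo_d_eq p hp]
  apply Finset.eq_of_subset_of_card_le
  · intro y hy
    obtain ⟨x, hx, rfl⟩ := Finset.mem_image.1 hy
    exact hmapsn x hx
  · rw [Finset.card_image_of_injective _ τ.injective]

lemma unpad {m n : ℕ} {r q : MPP m} (hr : r.d ⊆ Finset.range n)
    (hq : q.d ⊆ Finset.range n) (h : (r.padTo n).sameType q) :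
    ∃ p : MPP m, p.d ⊆ Finset.range n ∧ r.sameType p ∧ p.σ = q.σ := by
  have hpd : (r.padTo n).d ⊆ Finset.range n := by
    rw [padTo_d_eq r hr]
  obtain ⟨τ, hτm, hτmaps, hτc, hτo, hτim, hτconj⟩ := sameType_nice hpd hq h
  have hrd : ∀ x ∈ r.d, x ∈ (r.padTo n).d := fun x hx => by
    rw [padTo_d_eq r hr]; exact hr hx
  refine ⟨⟨r.d.image τ, q.σ, ?_, ?_⟩, ?_, ⟨τ, hτm, rfl, ?_⟩, rfl⟩
  · intro x hx
    exact Finset.mem_image.2 ⟨x, r.range_sub hx, hτm x (Finset.mem_range.1 hx)⟩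
  · intro x hx
    have hτinv : τ⁻¹ x ∉ r.d := fun hmem =>
      hx (Finset.mem_image.2 ⟨τ⁻¹ x, hmem, Equiv.Perm.apply_inv_self τ x⟩)
    have h1 : τ ((r.padTo n).σ (τ⁻¹ x)) = q.σ (τ (τ⁻¹ x)) := conj_apply hτconj _
    rw [Equiv.Perm.apply_inv_self] at h1
    rw [← h1]
    show τ (r.σ (τ⁻¹ x)) = x
    rw [r.fix _ hτinv, Equiv.Perm.apply_inv_self]
  · intro y hy
    obtain ⟨x, hx, rfl⟩ := Finset.mem_image.1 hy
    exact hq (hτmaps x (hrd x hx))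
  · exact hτconj

lemma canon_d {m n : ℕ} (ω : Equiv.Perm ℕ) {p : MPP m} (hp : p.d ⊆ Finset.range n)
    (hσ : p.σ = ω) :
    p.d = ((Finset.range n).filter (fun x => ω x ≠ x)) ∪ Finset.range m
      ∪ (p.d ∩ ((Finset.range n \ Finset.range m).filter (fun x => ω x = x))) := by
  ext x
  simp only [Finset.mem_union, Finset.mem_inter, Finset.mem_filter, Finset.mem_sdiff,
    Finset.mem_range]
  constructor
  · intro hx
    by_cases hfix : ω x = x
    · by_cases hxm : x < m
      · exact Or.inl (Or.inr hxm)
      · exact Or.inr ⟨hx, ⟨⟨Finset.mem_range.1 (hp hx), hxm⟩, hfix⟩⟩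
    · exact Or.inl (Or.inl ⟨Finset.mem_range.1 (hp hx), hfix⟩)
  · rintro ((⟨hxn, hfix⟩ | hxm) | ⟨hxd, _⟩)
    · by_contra hxd
      exact hfix (hσ ▸ p.fix x hxd)
    · exact p.range_sub (Finset.mem_range.2 hxm)
    · exact hxd

lemma sameType_of_sameS {m n : ℕ} (ω : Equiv.Perm ℕ) (hω : ∀ x ∉ Finset.range n, ω x = x)
    (hmn : Finset.range m ⊆ Finset.range n) (S S' : Finset ℕ)
    (hS : S ⊆ (Finset.range n \ Finset.range m).filter (fun x => ω x = x))
    (hS' : S' ⊆ (Finset.range n \ Finset.range m).filter (fun x => ω x = x))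
    (hcard : S.card = S'.card) (p p' : MPP m)
    (hpd : p.d = ((Finset.range n).filter (fun x => ω x ≠ x)) ∪ Finset.range m ∪ S)
    (hpd' : p'.d = ((Finset.range n).filter (fun x => ω x ≠ x)) ∪ Finset.range m ∪ S')
    (hpσ : p.σ = ω) (hpσ' : p'.σ = ω) : p.sameType p' := by
  classical
  set F := (Finset.range n \ Finset.range m).filter (fun x => ω x = x) with hF
  set suppF := (Finset.range n).filter (fun x => ω x ≠ x) with hsuppF
  have hFsupp : ∀ x ∈ F, x ∉ suppF := by
    intro x hx hx2
    exact (Finset.mem_filter.1 hx2).2 (Finset.mem_filter.1 hx).2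
  have hFm : ∀ x ∈ F, x ∉ Finset.range m := fun x hx =>
    (Finset.mem_sdiff.1 (Finset.mem_filter.1 hx).1).2
  have hSn : ∀ x ∈ S, x ∉ suppF ∪ Finset.range m := by
    intro x hx hx2
    rcases Finset.mem_union.1 hx2 with h | h
    · exact hFsupp x (hS hx) h
    · exact hFm x (hS hx) h
  have hS'n : ∀ x ∈ S', x ∉ suppF ∪ Finset.range m := by
    intro x hx hx2
    rcases Finset.mem_union.1 hx2 with h | h
    · exact hFsupp x (hS' hx) h
    · exact hFm x (hS' hx) h
  let e := Finset.equivOfCardEq hcard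
  let f : ℕ → ℕ := fun x => if h : x ∈ S then (e ⟨x, h⟩ : ℕ) else x
  have hfS : ∀ x (h : x ∈ S), f x = (e ⟨x, h⟩ : ℕ) := fun x h => dif_pos h
  have hfnS : ∀ x, x ∉ S → f x = x := fun x h => dif_neg h
  set s := suppF ∪ Finset.range m ∪ S with hs
  set t := suppF ∪ Finset.range m ∪ S' with ht
  have hssub : s ⊆ Finset.range n := by
    apply Finset.union_subset (Finset.union_subset (Finset.filter_subset _ _) hmn)
    exact fun x hx => (Finset.mem_sdiff.1 (Finset.mem_filter.1 (hS hx)).1).1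
  have htsub : t ⊆ Finset.range n := by
    apply Finset.union_subset (Finset.union_subset (Finset.filter_subset _ _) hmn)
    exact fun x hx => (Finset.mem_sdiff.1 (Finset.mem_filter.1 (hS' hx)).1).1
  have hb : Set.BijOn f ↑s ↑t := by
    refine ⟨?_, ?_, ?_⟩
    · intro x hx
      by_cases h : x ∈ S
      · rw [hfS x h]
        exact Finset.mem_coe.2 (Finset.mem_union_right _ (e ⟨x, h⟩).2)
      · rw [hfnS x h]
        rcases Finset.mem_union.1 (Finset.mem_coe.1 hx) with h2 | h2
        · exact Finset.mem_coe.2 (Finset.mem_union_left _ h2)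
        · exact absurd h2 h
    · intro x hx y hy hxy
      by_cases h1 : x ∈ S <;> by_cases h2 : y ∈ S
      · rw [hfS x h1, hfS y h2] at hxy
        have := e.injective (Subtype.ext hxy)
        exact congrArg Subtype.val this
      · rw [hfS x h1, hfnS y h2] at hxy
        rcases Finset.mem_union.1 (Finset.mem_coe.1 hy) with h3 | h3
        · exact absurd (hxy ▸ (e ⟨x, h1⟩).2) (fun hc => hS'n y hc h3)
        · exact absurd h3 h2
      · rw [hfnS x h1, hfS y h2] at hxy
        rcases Finset.mem_union.1 (Finset.mem_coe.1 hx) with h3 | h3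
        · exact absurd (hxy.symm ▸ (e ⟨y, h2⟩).2) (fun hc => hS'n x hc h3)
        · exact absurd h3 h1
      · rw [hfnS x h1, hfnS y h2] at hxy
        exact hxy
    · intro y hy
      by_cases h : y ∈ S'
      · refine ⟨(e.symm ⟨y, h⟩ : ℕ), ?_, ?_⟩
        · exact Finset.mem_coe.2 (Finset.mem_union_right _ (e.symm ⟨y, h⟩).2)
        · rw [hfS _ (e.symm ⟨y, h⟩).2]
          have : e ⟨(e.symm ⟨y, h⟩ : ℕ), (e.symm ⟨y, h⟩).2⟩ = ⟨y, h⟩ := by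
            rw [show (⟨(e.symm ⟨y, h⟩ : ℕ), (e.symm ⟨y, h⟩).2⟩ :
              {x // x ∈ S}) = e.symm ⟨y, h⟩ from Subtype.ext rfl, Equiv.apply_symm_apply]
          rw [this]
      · have h2 : y ∈ suppF ∪ Finset.range m := by
          rcases Finset.mem_union.1 (Finset.mem_coe.1 hy) with h3 | h3
          · exact h3
          · exact absurd h3 h
        have h3 : y ∉ S := fun hc => hSn y hc h2
        exact ⟨y, Finset.mem_coe.2 (Finset.mem_union_left _ h2), hfnS y h3⟩
  obtain ⟨τ, hτs, hτc, hτo⟩ := exists_extPerm n s t hssub htsub f hb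
  have hτsuppF : ∀ y ∈ suppF, τ y = y := by
    intro y hy
    have hyS : y ∉ S := fun hc => hFsupp y (hS hc) hy
    rw [hτs y (Finset.mem_union_left _ (Finset.mem_union_left _ hy)), hfnS y hyS]
  refine ⟨τ, ?_, ?_, ?_⟩
  · intro x hx
    have hxS : x ∉ S := fun hc => hFm x (hS hc) (Finset.mem_range.2 hx)
    rw [hτs x (Finset.mem_union_left _ (Finset.mem_union_right _ (Finset.mem_range.2 hx))),
      hfnS x hxS]
  · rw [hpd, hpd']
    have h1 : s.image τ = s.image f := Finset.image_congr (fun x hx => hτs x hx)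
    have h2 : s.image f = t := by
      apply Finset.coe_injective
      rw [Finset.coe_image]
      exact hb.image_eq
    rw [h1, h2]
  · apply conj_eq
    intro x
    rw [hpσ, hpσ']
    by_cases hfix : ω x = x
    · rw [hfix]
      by_cases hxs : x ∈ s
      · rcases Finset.mem_union.1 hxs with h1 | h1
        · rcases Finset.mem_union.1 h1 with h2 | h2
          · exact absurd hfix (Finset.mem_filter.1 h2).2
          · have hxS : x ∉ S := fun hc => hFm x (hS hc) h2
            rw [hτs x hxs, hfnS x hxS, hfix]
        · rw [hτs x hxs, hfS x h1]
          exact ((Finset.mem_filter.1 (hS' (e ⟨x, h1⟩).2)).2).symm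
      · by_cases hxn : x ∈ Finset.range n
        · have hmem := hτc x hxn hxs
          have hτxt : τ x ∉ t := (Finset.mem_sdiff.1 hmem).2
          have hτxn : τ x ∈ Finset.range n := (Finset.mem_sdiff.1 hmem).1
          by_contra hne
          exact hτxt (Finset.mem_union_left _ (Finset.mem_union_left _
            (Finset.mem_filter.2 ⟨hτxn, fun hc => hne hc.symm⟩)))
        · rw [hτo x hxn]
          exact (hω x hxn).symm
    · have hx1 : x ∈ suppF := by
        refine Finset.mem_filter.2 ⟨?_, hfix⟩
        by_contra h
        exact hfix (hω x h)
      have hωx : ω x ∈ suppF := by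
        have hne : ω (ω x) ≠ ω x := fun hc => hfix (ω.injective hc)
        refine Finset.mem_filter.2 ⟨?_, hne⟩
        by_contra h
        exact hne (hω _ h)
      rw [hτsuppF _ hωx, hτsuppF _ hx1]

lemma fiber_card {m n : ℕ} {r : MPP m} (hr : r.d ⊆ Finset.range n) {q : MPP m}
    (hq : q.d ⊆ Finset.range n) (hq2 : (r.padTo n).sameType q) (A' : Finset (MPP m))
    (hA' : ∀ p, p ∈ A' ↔ p.d ⊆ Finset.range n ∧ r.sameType p)
    [DecidablePred fun p : MPP m => p.σ = q.σ] :
    (A'.filter (fun p : MPP m => p.σ = q.σ)).card = (n - r.d.card + r.m1).choose r.m1 := by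
  classical
  have hmn : Finset.range m ⊆ Finset.range n := r.range_sub.trans hr
  set F := (Finset.range n \ Finset.range m).filter (fun x => q.σ x = x) with hF
  set suppF := (Finset.range n).filter (fun x => q.σ x ≠ x) with hsuppF
  have hqd : q.d = Finset.range n := by
    have h1 := card_d_eq_of_sameType hq2
    rw [padTo_d_eq r hr, Finset.card_range] at h1
    exact Finset.eq_of_subset_of_card_le hq (by rw [Finset.card_range]; exact h1.le)
  have hωo : ∀ x ∉ Finset.range n, q.σ x = x := fun x hx => q.fix x (by rw [hqd]; exact hx)
  -- F.card = n - r.d.card + r.m1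
  have hpadm1 : (r.padTo n).m1 = n - r.d.card + r.m1 := by
    have hstep : (r.padTo n).m1
        = ((Finset.range n \ Finset.range m).filter (fun x => r.σ x = x)).card := by
      unfold MPP.m1
      rw [padTo_d_eq r hr]
      rfl
    have hsplit : (Finset.range n \ Finset.range m).filter (fun x => r.σ x = x)
        = ((r.d \ Finset.range m).filter (fun x => r.σ x = x)) ∪ (Finset.range n \ r.d) := by
      ext x
      simp only [Finset.mem_filter, Finset.mem_sdiff, Finset.mem_union]
      constructor
      · rintro ⟨⟨hxn, hxm⟩, hfix⟩
        by_cases hxd : x ∈ r.d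
        · exact Or.inl ⟨⟨hxd, hxm⟩, hfix⟩
        · exact Or.inr ⟨hxn, hxd⟩
      · rintro (⟨⟨hxd, hxm⟩, hfix⟩ | ⟨hxn, hxd⟩)
        · exact ⟨⟨hr hxd, hxm⟩, hfix⟩
        · exact ⟨⟨hxn, fun hxm => hxd (r.range_sub hxm)⟩, r.fix x hxd⟩
    have hdisj : Disjoint ((r.d \ Finset.range m).filter (fun x => r.σ x = x))
        (Finset.range n \ r.d) := by
      rw [Finset.disjoint_left]
      intro x hx hx2
      exact (Finset.mem_sdiff.1 hx2).2 (Finset.mem_sdiff.1 (Finset.mem_filter.1 hx).1).1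
    rw [hstep, hsplit, Finset.card_union_of_disjoint hdisj, Finset.card_sdiff_of_subset hr,
      Finset.card_range]
    unfold MPP.m1
    exact Nat.add_comm _ _
  have hFcard : F.card = n - r.d.card + r.m1 := by
    have h1 : q.m1 = F.card := by
      unfold MPP.m1
      rw [hqd]
    rw [← h1, ← m1_eq_of_sameType hq2, hpadm1]
  -- canonical form of fiber elements
  have hcanon : ∀ p : MPP m, p.d ⊆ Finset.range n → p.σ = q.σ →
      p.d = suppF ∪ Finset.range m ∪ (p.d ∩ F) := fun p hp hσ => canon_d q.σ hp hσ
  have hScard : ∀ p : MPP m, p.d ⊆ Finset.range n → r.sameType p → p.σ = q.σ →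
      (p.d ∩ F).card = r.m1 := by
    intro p hp hst hσ
    have heq : p.d ∩ F = (p.d \ Finset.range m).filter (fun x => p.σ x = x) := by
      ext x
      simp only [hF, Finset.mem_inter, Finset.mem_filter, Finset.mem_sdiff]
      constructor
      · rintro ⟨hxd, ⟨hxn, hxm⟩, hfix⟩
        exact ⟨⟨hxd, hxm⟩, by rw [hσ]; exact hfix⟩
      · rintro ⟨⟨hxd, hxm⟩, hfix⟩
        exact ⟨hxd, ⟨⟨hp hxd, hxm⟩, by rw [← hσ]; exact hfix⟩⟩
    rw [heq]
    exact (m1_eq_of_sameType hst).symm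
  -- a base point of the fiber
  obtain ⟨p₀, hp₀d, hp₀st, hp₀σ⟩ := unpad hr hq hq2
  -- the bijection with powersetCard
  rw [← hFcard, ← Finset.card_powersetCard r.m1 F]
  · apply Finset.card_nbij' (fun p => p.d ∩ F)
      (fun S => ⟨suppF ∪ Finset.range m ∪ S, q.σ,
        fun x hx => Finset.mem_union_left _ (Finset.mem_union_right _ hx),
        fun x hx => by
          by_cases hxn : x ∈ Finset.range n
          · by_contra hne
            exact hx (Finset.mem_union_left _ (Finset.mem_union_left _
              (Finset.mem_filter.2 ⟨hxn, hne⟩)))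
          · exact hωo x hxn⟩)
    · intro p hp
      rw [Finset.mem_coe, Finset.mem_filter] at hp
      obtain ⟨hpA, hpσ⟩ := hp
      rw [hA'] at hpA
      exact Finset.mem_powersetCard.2 ⟨Finset.inter_subset_right,
        hScard p hpA.1 hpA.2 hpσ⟩
    · intro S hS
      rw [Finset.mem_coe, Finset.mem_powersetCard] at hS
      obtain ⟨hSF, hScd⟩ := hS
      rw [Finset.mem_coe, Finset.mem_filter]
      constructor
      · rw [hA']
        have hdsub : suppF ∪ Finset.range m ∪ S ⊆ Finset.range n := by
          apply Finset.union_subset (Finset.union_subset (Finset.filter_subset _ _) hmn)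
          exact hSF.trans ((Finset.filter_subset _ _).trans Finset.sdiff_subset)
        refine ⟨hdsub, sameType_trans hp₀st ?_⟩
        apply sameType_of_sameS q.σ hωo hmn (p₀.d ∩ F) S Finset.inter_subset_right hSF
        · rw [hScard p₀ hp₀d hp₀st hp₀σ, hScd]
        · exact hcanon p₀ hp₀d hp₀σ
        · rfl
        · exact hp₀σ
        · rfl
      · rfl
    · intro p hp
      rw [Finset.mem_coe, Finset.mem_filter] at hp
      obtain ⟨hpA, hpσ⟩ := hp
      rw [hA'] at hpA
      refine MPP.ext ?_ ?_
      · exact (hcanon p hpA.1 hpσ).symm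
      · exact hpσ.symm
    · intro S hS
      rw [Finset.mem_coe, Finset.mem_powersetCard] at hS
      obtain ⟨hSF, hScd⟩ := hS
      show (suppF ∪ Finset.range m ∪ S) ∩ F = S
      ext x
      simp only [Finset.mem_inter, Finset.mem_union]
      constructor
      · rintro ⟨(h1 | h1) | h1, h2⟩
        · exact absurd (Finset.mem_filter.1 h2).2 (Finset.mem_filter.1 h1).2
        · exact absurd h1 (Finset.mem_sdiff.1 (Finset.mem_filter.1 h2).1).2
        · exact h1
      · intro hx
        exact ⟨Or.inr hx, hSF hx⟩

lemma finite_dsub (m n : ℕ) : {p : MPP m | p.d ⊆ Finset.range n}.Finite := by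
  rw [← Set.finite_coe_iff]
  have hlt : ∀ (p : MPP m), p.d ⊆ Finset.range n → ∀ i : Fin n, p.σ i < n := by
    intro p hp i
    by_cases h : (i : ℕ) ∈ p.d
    · exact Finset.mem_range.1 (hp (mem_d_apply p h))
    · rw [p.fix _ h]
      exact i.2
  have hdlt : ∀ (p : MPP m), p.d ⊆ Finset.range n → ∀ x ∈ p.d, x < n := by
    intro p hp x hx
    exact Finset.mem_range.1 (hp hx)
  let f : {p : MPP m | p.d ⊆ Finset.range n} → Finset (Fin n) × (Fin n → Fin n) :=
    fun p => (p.1.d.attachFin (hdlt p.1 p.2), fun i => ⟨p.1.σ i, hlt p.1 p.2 i⟩)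
  apply Finite.of_injective f
  intro p q hpq
  have h1 := congrArg Prod.fst hpq
  have h2 := congrArg Prod.snd hpq
  simp only [f] at h1 h2
  apply Subtype.ext
  apply MPP.ext
  · ext x
    by_cases hx : x < n
    · have := congrArg (fun s => (⟨x, hx⟩ : Fin n) ∈ s) h1
      simpa [Finset.mem_attachFin] using this
    · constructor
      · intro h; exact absurd (hdlt p.1 p.2 x h) hx
      · intro h; exact absurd (hdlt q.1 q.2 x h) hx
  · ext x
    by_cases hx : x < n
    · have := congrArg (fun g => (g ⟨x, hx⟩ : Fin n).val) h2
      simpa using this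
    · have hxp : x ∉ p.1.d := fun h => hx (hdlt p.1 p.2 x h)
      have hxq : x ∉ q.1.d := fun h => hx (hdlt q.1 q.2 x h)
      rw [p.1.fix x hxp, q.1.fix x hxq]

end MPPAux

open MPPAux in
/-- ψ(𝐀_ρ(n)) = C(n − |ρ| + m₁(ρ), m₁(ρ)) · K_{ρ̲ₙ}. -/
theorem psi_A_eq (m n : ℕ) (r : MPP m) (hr : r.d ⊆ Finset.range n) :
    MonoidAlgebra.mapDomain MPP.σ
        (∑ᶠ p ∈ {p : MPP m | p.d ⊆ Finset.range n ∧ MPP.sameType r p},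
          MonoidAlgebra.single p (1 : ℂ)) =
      ((n - r.d.card + r.m1).choose r.m1 : ℂ) •
        ∑ᶠ p ∈ {p : MPP m | p.d ⊆ Finset.range n ∧ MPP.sameType (r.padTo n) p},
          MonoidAlgebra.single p.σ (1 : ℂ) := by
  classical
  have hA : {p : MPP m | p.d ⊆ Finset.range n ∧ MPP.sameType r p}.Finite :=
    (finite_dsub m n).subset (fun p hp => hp.1)
  have hB : {p : MPP m | p.d ⊆ Finset.range n ∧ MPP.sameType (r.padTo n) p}.Finite :=
    (finite_dsub m n).subset (fun p hp => hp.1)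
  rw [finsum_mem_eq_finite_toFinset_sum _ hA, finsum_mem_eq_finite_toFinset_sum _ hB]
  set A' := hA.toFinset with hA'def
  set B' := hB.toFinset with hB'def
  have hmemA : ∀ p : MPP m, p ∈ A' ↔ p.d ⊆ Finset.range n ∧ r.sameType p := by
    intro p
    rw [hA'def, Set.Finite.mem_toFinset]
    rfl
  have hmemB : ∀ p : MPP m, p ∈ B' ↔ p.d ⊆ Finset.range n ∧ (r.padTo n).sameType p := by
    intro p
    rw [hB'def, Set.Finite.mem_toFinset]
    rfl
  have hmap : MonoidAlgebra.mapDomain (MPP.σ) (∑ p ∈ A', MonoidAlgebra.single p (1 : ℂ))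
      = ∑ p ∈ A', MonoidAlgebra.single p.σ (1 : ℂ) := by
    rw [show (MonoidAlgebra.mapDomain (R := ℂ) MPP.σ : MonoidAlgebra ℂ (MPP m) → _)
        = ⇑(MonoidAlgebra.mapDomainLinearMap ℂ ℂ (MPP.σ (m := m))) from rfl, map_sum]
    exact Finset.sum_congr rfl (fun p _ => MonoidAlgebra.mapDomainLinearMap_single _ _ _)
  rw [hmap]
  have hBd : ∀ p ∈ B', p.d = Finset.range n := by
    intro p hp
    rw [hmemB] at hp
    have h1 := card_d_eq_of_sameType hp.2
    rw [padTo_d_eq r hr, Finset.card_range] at h1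
    exact Finset.eq_of_subset_of_card_le hp.1 (by rw [Finset.card_range]; exact h1.le)
  have hinj : ∀ p ∈ B', ∀ q ∈ B', MPP.σ p = MPP.σ q → p = q := by
    intro p hp q hq h
    exact MPP.ext ((hBd p hp).trans (hBd q hq).symm) h
  rw [show (∑ p ∈ B', MonoidAlgebra.single p.σ (1 : ℂ))
      = ∑ ω ∈ B'.image MPP.σ, MonoidAlgebra.single ω (1 : ℂ) from
    (Finset.sum_image (f := fun ω => MonoidAlgebra.single ω (1 : ℂ)) hinj).symm]
  rw [← Finset.sum_fiberwise_of_maps_to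
    (fun p (hp : p ∈ A') => Finset.mem_image_of_mem MPP.σ hp)
    (fun p => MonoidAlgebra.single p.σ (1 : ℂ))]
  have himg : A'.image MPP.σ = B'.image MPP.σ := by
    apply Finset.Subset.antisymm
    · intro ω hω
      obtain ⟨p, hp, rfl⟩ := Finset.mem_image.1 hω
      rw [hmemA] at hp
      refine Finset.mem_image.2 ⟨p.padTo n, ?_, rfl⟩
      rw [hmemB]
      refine ⟨?_, pad_sameType hr hp.1 hp.2⟩
      show p.d ∪ Finset.range n ⊆ Finset.range n
      exact Finset.union_subset hp.1 (Finset.Subset.refl _)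
    · intro ω hω
      obtain ⟨q, hq, rfl⟩ := Finset.mem_image.1 hω
      rw [hmemB] at hq
      obtain ⟨p, hp1, hp2, hp3⟩ := unpad hr hq.1 hq.2
      exact Finset.mem_image.2 ⟨p, (hmemA p).2 ⟨hp1, hp2⟩, hp3⟩
  rw [himg, Finset.smul_sum]
  apply Finset.sum_congr rfl
  intro ω hω
  obtain ⟨q, hq, rfl⟩ := Finset.mem_image.1 hω
  rw [hmemB] at hq
  have hfib := fiber_card hr hq.1 hq.2 A' hmemA
  calc ∑ p ∈ A'.filter (fun p => MPP.σ p = q.σ), MonoidAlgebra.single p.σ (1 : ℂ)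
      = ∑ _p ∈ A'.filter (fun p => MPP.σ p = q.σ), MonoidAlgebra.single q.σ (1 : ℂ) :=
        Finset.sum_congr rfl (fun p hp => by rw [(Finset.mem_filter.1 hp).2])
    _ = (A'.filter (fun p => MPP.σ p = q.σ)).card • MonoidAlgebra.single q.σ (1 : ℂ) :=
        Finset.sum_const _
    _ = ((n - r.d.card + r.m1).choose r.m1 : ℂ) • MonoidAlgebra.single q.σ (1 : ℂ) := by
        rw [hfib, ← Nat.cast_smul_eq_nsmul ℂ]
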